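/- arXiv:2508.09464 — 7 statements merged into one kernel-verified Lean document; each statement's English description precedes it below -/
import Mathlib

section
/- (Lemma 2, order dependence of biased updating) Let Ω = {0,1} and identify a belief with the probability μ ∈ [0,1] assigned to state 1. For β ∈ (1/2, 1) define the Bayesian updates B₁(μ) = μβ/(μβ + (1−μ)(1−β)) and B₀(μ) = μ(1−β)/(μ(1−β) + (1−μ)β), and for α ∈ [0,1) the PbP-N biased updates U₁(μ) = αμ + (1−α)B₁(μ) and U₀(μ) = αμ + (1−α)B₀(μ). Then with α = 1/2 and β = 3/4 and prior 1/2: B₀(B₁(1/2)) = 1/2 = B₁(B₀(1/2)), but U₀(U₁(1/2)) = 55/112 and U₁(U₀(1/2)) = 57/112, so U₀(U₁(1/2)) ≠ U₁(U₀(1/2)). Hence two sequences of signal realizations can lead to the same Bayesian posterior but to different biased posteriors. -/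
/-- Bayesian update after the signal indicating state 1 (signal accuracy `β`). -/
noncomputable def B1 (β μ : ℝ) : ℝ := μ * β / (μ * β + (1 - μ) * (1 - β))

/-- Bayesian update after the signal indicating state 0 (signal accuracy `β`). -/
noncomputable def B0 (β μ : ℝ) : ℝ := μ * (1 - β) / (μ * (1 - β) + (1 - μ) * β)

/-- PbP-N biased update after the signal indicating state 1. -/
noncomputable def U1 (α β μ : ℝ) : ℝ := α * μ + (1 - α) * B1 β μ

/-- PbP-N biased update after the signal indicating state 0. -/
noncomputable def U0 (α β μ : ℝ) : ℝ := α * μ + (1 - α) * B0 β μ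

/-- Lemma 2: with `α = 1/2`, `β = 3/4` and prior `1/2`, the two signal
orders give the same Bayesian posterior `1/2` but different biased posteriors
(`55/112` versus `57/112`). -/
theorem stmt_3 :
    B0 (3/4) (B1 (3/4) (1/2)) = 1/2 ∧
    B1 (3/4) (B0 (3/4) (1/2)) = 1/2 ∧
    U0 (1/2) (3/4) (U1 (1/2) (3/4) (1/2)) = 55/112 ∧
    U1 (1/2) (3/4) (U0 (1/2) (3/4) (1/2)) = 57/112 ∧
    U0 (1/2) (3/4) (U1 (1/2) (3/4) (1/2)) ≠ U1 (1/2) (3/4) (U0 (1/2) (3/4) (1/2)) := by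
  norm_num [B0, B1, U0, U1]
end

section
/- Fix a finite nonempty set Ω, a full-support prior μ0 ∈ Δ(Ω), α ∈ [0,1), and an arbitrary function g : Δ(Ω) → ℝ. Then the set of values { Σ_{μ∈T} τ(μ)·g(α·μ0 + (1−α)·μ) : (T,τ) a finite-support posterior distribution Bayes plausible for μ0 } equals the set of values { Σ_{μ'∈T'} τ'(μ')·g(μ') : (T',τ') a finite-support posterior distribution with Σ_{μ'∈T'} τ'(μ')·μ' = μ0 and μ'(ω) ≥ α·μ0(ω) for every μ' ∈ T' with τ'(μ') > 0 and every ω }. -/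
/-- A belief on a finite state space: nonnegative and sums to one. -/
def IsBelief {Ω : Type*} [Fintype Ω] (μ : Ω → ℝ) : Prop :=
  (∀ ω, 0 ≤ μ ω) ∧ ∑ ω, μ ω = 1

/-!
The distortion `μ ↦ α • μ0 + (1 - α) • μ` is an affine bijection of `Ω → ℝ` for `α ≠ 1`: it fixes
`μ0` and commutes with weighted averages, so pushing a distribution of posteriors forward or
pulling it back preserves the barycenter `μ0` and the value of the objective. It maps beliefs onto
exactly the beliefs dominating `α • μ0`. A biased distribution is pulled back only after
discarding its zero-weight points, the only ones allowed to violate that domination.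
-/

open Finset Function

theorem Finset.sum_image_of_leftInverse {α β M : Type*} [DecidableEq β] [AddCommMonoid M]
    {f : α → β} {g : β → α} (hgf : LeftInverse g f) (s : Finset α) (F : α → β → M) :
    ∑ y ∈ s.image f, F (g y) y = ∑ x ∈ s, F x (f x) := by
  rw [sum_image hgf.injective.injOn]
  simp only [hgf _]

theorem Finset.sum_filter_pos_mul {ι : Type*} (s : Finset ι) {τ : ι → ℝ}
    (hτ : ∀ i ∈ s, 0 ≤ τ i) (f : ι → ℝ) :
    ∑ i ∈ s with 0 < τ i, τ i * f i = ∑ i ∈ s, τ i * f i := by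
  refine sum_filter_of_ne fun i hi hne => (hτ i hi).lt_of_ne' ?_
  rintro h
  simp [h] at hne

noncomputable section Distortion

variable {Ω : Type*} (α : ℝ) (μ0 : Ω → ℝ)

def distort (μ : Ω → ℝ) : Ω → ℝ := fun ω => α * μ0 ω + (1 - α) * μ ω

def undistort (ν : Ω → ℝ) : Ω → ℝ := fun ω => (ν ω - α * μ0 ω) / (1 - α)

variable {α}

theorem undistort_distort (hα : α ≠ 1) : LeftInverse (undistort α μ0) (distort α μ0) := by
  intro μ
  have : 1 - α ≠ 0 := sub_ne_zero.mpr hα.symm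
  funext ω
  simp only [distort, undistort]
  field_simp
  ring

theorem distort_undistort (hα : α ≠ 1) : LeftInverse (distort α μ0) (undistort α μ0) := by
  intro ν
  have : 1 - α ≠ 0 := sub_ne_zero.mpr hα.symm
  funext ω
  simp only [distort, undistort]
  field_simp
  ring

theorem distort_self : distort α μ0 μ0 = μ0 := by
  funext ω
  simp only [distort]
  ring

theorem undistort_self (hα : α ≠ 1) : undistort α μ0 μ0 = μ0 := by
  have : 1 - α ≠ 0 := sub_ne_zero.mpr hα.symm
  funext ω
  simp only [undistort]
  field_simp

variable {μ0}

theorem sum_mul_distort {ι : Type*} (s : Finset ι) {τ : ι → ℝ} (hτ : ∑ i ∈ s, τ i = 1)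
    (μ : ι → Ω → ℝ) (ω : Ω) :
    ∑ i ∈ s, τ i * distort α μ0 (μ i) ω = distort α μ0 (fun ω => ∑ i ∈ s, τ i * μ i ω) ω := by
  simp only [distort, mul_add, sum_add_distrib, mul_left_comm (τ _), ← mul_sum, ← sum_mul, hτ,
    one_mul]

theorem sum_mul_undistort {ι : Type*} (s : Finset ι) {τ : ι → ℝ} (hτ : ∑ i ∈ s, τ i = 1)
    (ν : ι → Ω → ℝ) (ω : Ω) :
    ∑ i ∈ s, τ i * undistort α μ0 (ν i) ω = undistort α μ0 (fun ω => ∑ i ∈ s, τ i * ν i ω) ω := by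
  simp only [undistort, mul_div_assoc', ← sum_div, mul_sub, sum_sub_distrib, ← sum_mul, hτ,
    one_mul]

theorem isBelief_distort [Fintype Ω] (hμ0 : IsBelief μ0) (hα0 : 0 ≤ α) (hα1 : α ≤ 1) {μ : Ω → ℝ}
    (hμ : IsBelief μ) : IsBelief (distort α μ0 μ) := by
  refine ⟨fun ω => ?_, ?_⟩
  · have := hμ0.1 ω
    have := hμ.1 ω
    simp only [distort]
    nlinarith
  · simp only [distort, sum_add_distrib, ← mul_sum, hμ0.2, hμ.2]
    ring

theorem le_distort [Fintype Ω] (hα1 : α ≤ 1) {μ : Ω → ℝ} (hμ : IsBelief μ) (ω : Ω) :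
    α * μ0 ω ≤ distort α μ0 μ ω :=
  le_add_of_nonneg_right (mul_nonneg (sub_nonneg.mpr hα1) (hμ.1 ω))

theorem isBelief_undistort [Fintype Ω] (hμ0 : IsBelief μ0) (hα : α < 1) {ν : Ω → ℝ}
    (hν : IsBelief ν) (hdom : ∀ ω, α * μ0 ω ≤ ν ω) : IsBelief (undistort α μ0 ν) := by
  have : 1 - α ≠ 0 := by linarith
  refine ⟨fun ω => div_nonneg (sub_nonneg.mpr (hdom ω)) (by linarith), ?_⟩
  simp only [undistort, ← sum_div, sum_sub_distrib, ← mul_sum, hμ0.2, hν.2]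
  field_simp

end Distortion

section Programs

variable {Ω : Type*} [Fintype Ω] {μ0 : Ω → ℝ} {α : ℝ}

theorem exists_biased_of_bayesian (hμ0 : IsBelief μ0) (hα : 0 ≤ α ∧ α < 1)
    {T : Finset (Ω → ℝ)} {τ : (Ω → ℝ) → ℝ} (hbel : ∀ μ ∈ T, IsBelief μ)
    (hτ0 : ∀ μ ∈ T, 0 ≤ τ μ) (hτ1 : ∑ μ ∈ T, τ μ = 1) (hbar : ∀ ω, ∑ μ ∈ T, τ μ * μ ω = μ0 ω)
    (g : (Ω → ℝ) → ℝ) :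
    ∃ (T' : Finset (Ω → ℝ)) (τ' : (Ω → ℝ) → ℝ),
      (∀ μ' ∈ T', IsBelief μ') ∧ (∀ μ' ∈ T', 0 ≤ τ' μ') ∧ (∑ μ' ∈ T', τ' μ' = 1) ∧
      (∀ ω, ∑ μ' ∈ T', τ' μ' * μ' ω = μ0 ω) ∧
      (∀ μ' ∈ T', 0 < τ' μ' → ∀ ω, α * μ0 ω ≤ μ' ω) ∧
      ∑ μ ∈ T, τ μ * g (distort α μ0 μ) = ∑ μ' ∈ T', τ' μ' * g μ' := by
  have hbar' : (fun ω => ∑ μ ∈ T, τ μ * μ ω) = μ0 := funext hbar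
  have hinv := undistort_distort μ0 hα.2.ne
  have hsum := sum_image_of_leftInverse (M := ℝ) hinv T
  refine ⟨T.image (distort α μ0), τ ∘ undistort α μ0, ?_, ?_, ?_, fun ω => ?_, ?_, ?_⟩
  · simp only [mem_image]
    rintro _ ⟨μ, hμ, rfl⟩
    exact isBelief_distort hμ0 hα.1 hα.2.le (hbel μ hμ)
  · simp only [mem_image]
    rintro _ ⟨μ, hμ, rfl⟩
    simpa [hinv μ] using hτ0 μ hμ
  · simpa [hτ1] using hsum fun μ _ => τ μ
  · simp only [comp_apply, hsum fun μ ν => τ μ * ν ω, sum_mul_distort T hτ1, hbar', distort_self]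
  · simp only [mem_image]
    rintro _ ⟨μ, hμ, rfl⟩ _
    exact le_distort hα.2.le (hbel μ hμ)
  · simp only [comp_apply, hsum fun μ ν => τ μ * g ν]

theorem exists_bayesian_of_biased (hμ0 : IsBelief μ0) (hα : α < 1)
    {T' : Finset (Ω → ℝ)} {τ' : (Ω → ℝ) → ℝ} (hbel : ∀ μ' ∈ T', IsBelief μ')
    (hτ0 : ∀ μ' ∈ T', 0 ≤ τ' μ') (hτ1 : ∑ μ' ∈ T', τ' μ' = 1)
    (hbar : ∀ ω, ∑ μ' ∈ T', τ' μ' * μ' ω = μ0 ω)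
    (hdom : ∀ μ' ∈ T', 0 < τ' μ' → ∀ ω, α * μ0 ω ≤ μ' ω) (g : (Ω → ℝ) → ℝ) :
    ∃ (T : Finset (Ω → ℝ)) (τ : (Ω → ℝ) → ℝ),
      (∀ μ ∈ T, IsBelief μ) ∧ (∀ μ ∈ T, 0 ≤ τ μ) ∧ (∑ μ ∈ T, τ μ = 1) ∧
      (∀ ω, ∑ μ ∈ T, τ μ * μ ω = μ0 ω) ∧
      ∑ μ' ∈ T', τ' μ' * g μ' = ∑ μ ∈ T, τ μ * g (distort α μ0 μ) := by
  set S := T'.filter fun ν => 0 < τ' ν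
  have hS : ∀ f : (Ω → ℝ) → ℝ, ∑ ν ∈ S, τ' ν * f ν = ∑ ν ∈ T', τ' ν * f ν :=
    sum_filter_pos_mul T' hτ0
  have hτS : ∑ ν ∈ S, τ' ν = 1 := by simpa [hτ1] using hS fun _ => 1
  have hbarS : (fun ω => ∑ ν ∈ S, τ' ν * ν ω) = μ0 :=
    funext fun ω => (hS fun ν => ν ω).trans (hbar ω)
  have hinv := distort_undistort μ0 hα.ne
  have hsum := sum_image_of_leftInverse (M := ℝ) hinv S
  refine ⟨S.image (undistort α μ0), τ' ∘ distort α μ0, ?_, ?_, ?_, fun ω => ?_, ?_⟩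
  · simp only [mem_image, S, mem_filter]
    rintro _ ⟨ν, ⟨hν, hpos⟩, rfl⟩
    exact isBelief_undistort hμ0 hα (hbel ν hν) (hdom ν hν hpos)
  · simp only [mem_image, S, mem_filter]
    rintro _ ⟨ν, ⟨_, hpos⟩, rfl⟩
    simpa [hinv ν] using hpos.le
  · simpa [hτS] using hsum fun ν _ => τ' ν
  · simp only [comp_apply, hsum fun ν μ => τ' ν * μ ω, sum_mul_undistort S hτS, hbarS,
      undistort_self μ0 hα.ne]
  · simp only [comp_apply, hsum fun ν μ => τ' ν * g (distort α μ0 μ), hinv _, hS g]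

end Programs

theorem stmt_4_general {Ω : Type*} [Fintype Ω]
    (μ0 : Ω → ℝ) (hμ0 : IsBelief μ0)
    (α : ℝ) (hα : 0 ≤ α ∧ α < 1)
    (g : (Ω → ℝ) → ℝ) :
    { r : ℝ | ∃ (T : Finset (Ω → ℝ)) (τ : (Ω → ℝ) → ℝ),
        (∀ μ ∈ T, IsBelief μ) ∧ (∀ μ ∈ T, 0 ≤ τ μ) ∧ (∑ μ ∈ T, τ μ = 1) ∧
        (∀ ω, ∑ μ ∈ T, τ μ * μ ω = μ0 ω) ∧
        r = ∑ μ ∈ T, τ μ * g (fun ω => α * μ0 ω + (1 - α) * μ ω) } =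
    { r : ℝ | ∃ (T' : Finset (Ω → ℝ)) (τ' : (Ω → ℝ) → ℝ),
        (∀ μ' ∈ T', IsBelief μ') ∧ (∀ μ' ∈ T', 0 ≤ τ' μ') ∧ (∑ μ' ∈ T', τ' μ' = 1) ∧
        (∀ ω, ∑ μ' ∈ T', τ' μ' * μ' ω = μ0 ω) ∧
        (∀ μ' ∈ T', 0 < τ' μ' → ∀ ω, α * μ0 ω ≤ μ' ω) ∧
        r = ∑ μ' ∈ T', τ' μ' * g μ' } := by
  ext r
  constructor
  · rintro ⟨T, τ, hbel, hτ0, hτ1, hbar, rfl⟩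
    exact exists_biased_of_bayesian hμ0 hα hbel hτ0 hτ1 hbar g
  · rintro ⟨T', τ', hbel, hτ0, hτ1, hbar, hdom, rfl⟩
    exact exists_bayesian_of_biased hμ0 hα.2 hbel hτ0 hτ1 hbar hdom g

/-- change of variables: the achievable values of
`Σ τ(μ)·g(α·μ0+(1−α)·μ)` over Bayes-plausible distributions of Bayesian posteriors
coincide with the achievable values of `Σ τ'(μ')·g(μ')` over distributions of
biased posteriors averaging to `μ0` whose support dominates `α·μ0` pointwise. -/
theorem stmt_4 {Ω : Type*} [Fintype Ω] [Nonempty Ω]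
    (μ0 : Ω → ℝ) (hμ0 : IsBelief μ0) (hfull : ∀ ω, 0 < μ0 ω)
    (α : ℝ) (hα : 0 ≤ α ∧ α < 1)
    (g : (Ω → ℝ) → ℝ) :
    { r : ℝ | ∃ (T : Finset (Ω → ℝ)) (τ : (Ω → ℝ) → ℝ),
        (∀ μ ∈ T, IsBelief μ) ∧ (∀ μ ∈ T, 0 ≤ τ μ) ∧ (∑ μ ∈ T, τ μ = 1) ∧
        (∀ ω, ∑ μ ∈ T, τ μ * μ ω = μ0 ω) ∧
        r = ∑ μ ∈ T, τ μ * g (fun ω => α * μ0 ω + (1 - α) * μ ω) } =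
    { r : ℝ | ∃ (T' : Finset (Ω → ℝ)) (τ' : (Ω → ℝ) → ℝ),
        (∀ μ' ∈ T', IsBelief μ') ∧ (∀ μ' ∈ T', 0 ≤ τ' μ') ∧ (∑ μ' ∈ T', τ' μ' = 1) ∧
        (∀ ω, ∑ μ' ∈ T', τ' μ' * μ' ω = μ0 ω) ∧
        (∀ μ' ∈ T', 0 < τ' μ' → ∀ ω, α * μ0 ω ≤ μ' ω) ∧
        r = ∑ μ' ∈ T', τ' μ' * g μ' } :=
  stmt_4_general μ0 hμ0 α hα g
end

section
/- (Corollary 1, sufficiency) Let Ω and A be finite nonempty sets, u : Ω × A → ℝ (common preferences), μ0 ∈ Δ(Ω) a full-support prior, α ∈ [0,1). Define the one-shot biased value V_α(μ0) = sSup { Σ_{μ∈T} τ(μ)·max{ Σ_ω μ(ω)·u(ω,a) : a ∈ argmax_{a'∈A} Σ_ω (α·μ0 + (1−α)·μ)(ω)·u(ω,a') } : (T,τ) a finite-support posterior distribution Bayes plausible for μ0 }. Suppose there exists a state ω̄ ∈ Ω such that for every μ ∈ Δ(Ω) with μ(ω) ≥ α·μ0(ω) for all ω, the sets argmax_{a∈A}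 u(ω̄,a) and argmax_{a∈A} Σ_ω μ(ω)·u(ω,a) are disjoint. Then V_α(μ0) < Σ_ω μ0(ω)·max_{a∈A} u(ω,a). -/
/-- Corollary 1, sufficiency: with common preferences, if there is a
state `ω̄` such that no action optimal at `ω̄` is optimal at any belief dominating
`α·μ0` pointwise, then the one-shot biased value `V_α(μ0)` is strictly below the
full-information payoff.  The inner `sSup` is the sender's payoff at Bayesian
posterior `μ`, with the receiver optimizing at the biased posterior
`α·μ0 + (1−α)·μ` and ties broken in the sender's favor. -/
theorem stmt_8 {Ω A : Type*} [Fintype Ω] [Nonempty Ω] [Fintype A] [Nonempty A]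
    (u : Ω → A → ℝ)
    (μ0 : Ω → ℝ) (hμ0 : IsBelief μ0) (hfull : ∀ ω, 0 < μ0 ω)
    (α : ℝ) (hα : 0 ≤ α ∧ α < 1)
    (hdisj : ∃ ωbar : Ω, ∀ μ : Ω → ℝ, IsBelief μ → (∀ ω, α * μ0 ω ≤ μ ω) →
      ¬ ∃ a : A, (∀ a', u ωbar a' ≤ u ωbar a) ∧
        (∀ a', ∑ ω, μ ω * u ω a' ≤ ∑ ω, μ ω * u ω a)) :
    sSup { r : ℝ | ∃ (T : Finset (Ω → ℝ)) (τ : (Ω → ℝ) → ℝ),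
        (∀ μ ∈ T, IsBelief μ) ∧ (∀ μ ∈ T, 0 ≤ τ μ) ∧ (∑ μ ∈ T, τ μ = 1) ∧
        (∀ ω, ∑ μ ∈ T, τ μ * μ ω = μ0 ω) ∧
        r = ∑ μ ∈ T, τ μ * sSup { s : ℝ | ∃ a : A,
              (∀ a', ∑ ω, (α * μ0 ω + (1 - α) * μ ω) * u ω a' ≤
                     ∑ ω, (α * μ0 ω + (1 - α) * μ ω) * u ω a) ∧
              s = ∑ ω, μ ω * u ω a } }
      < ∑ ω, μ0 ω * Finset.univ.sup' Finset.univ_nonempty (fun a : A => u ω a) := by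
  classical
  obtain ⟨ωbar, hωbar⟩ := hdisj
  set M : Ω → ℝ := fun ω => Finset.univ.sup' Finset.univ_nonempty (fun a : A => u ω a) with hM
  -- the set of actions that are NOT optimal at ωbar
  set N : Finset A := Finset.univ.filter (fun a => ¬ ∀ a', u ωbar a' ≤ u ωbar a) with hN
  -- N is nonempty
  have hNmem : ∀ (μ : Ω → ℝ), IsBelief μ → (∀ ω, α * μ0 ω ≤ μ ω) →
      ∀ a : A, (∀ a', ∑ ω, μ ω * u ω a' ≤ ∑ ω, μ ω * u ω a) → a ∈ N := by
    intro μ hμ hge a hopt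
    rw [hN, Finset.mem_filter]
    refine ⟨Finset.mem_univ _, fun h => ?_⟩
    exact hωbar μ hμ hge ⟨a, h, hopt⟩
  have hμ0ge : ∀ ω, α * μ0 ω ≤ μ0 ω := by
    intro ω
    nlinarith [(hfull ω).le, hα.1, hα.2]
  have hNne : N.Nonempty := by
    obtain ⟨a0, _, ha0⟩ := Finset.exists_max_image Finset.univ
      (fun a => ∑ ω, μ0 ω * u ω a) Finset.univ_nonempty
    exact ⟨a0, hNmem μ0 hμ0 hμ0ge a0 (fun a' => ha0 a' (Finset.mem_univ a'))⟩
  set δ : ℝ := M ωbar - N.sup' hNne (u ωbar) with hδdef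
  have hδpos : 0 < δ := by
    rw [hδdef, sub_pos]
    rw [Finset.sup'_lt_iff]
    intro a ha
    rw [hN, Finset.mem_filter] at ha
    push_neg at ha
    obtain ⟨a', ha'⟩ := ha.2
    exact lt_of_lt_of_le ha' (Finset.le_sup' (u ωbar) (Finset.mem_univ a'))
  -- key per-posterior bound
  have hinner : ∀ μ : Ω → ℝ, IsBelief μ →
      sSup { s : ℝ | ∃ a : A,
          (∀ a', ∑ ω, (α * μ0 ω + (1 - α) * μ ω) * u ω a' ≤
                 ∑ ω, (α * μ0 ω + (1 - α) * μ ω) * u ω a) ∧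
          s = ∑ ω, μ ω * u ω a }
        ≤ ∑ ω, μ ω * M ω - μ ωbar * δ := by
    intro μ hμ
    set ν : Ω → ℝ := fun ω => α * μ0 ω + (1 - α) * μ ω with hν
    have hνbel : IsBelief ν := by
      constructor
      · intro ω
        have := hμ.1 ω
        have := (hfull ω).le
        show (0:ℝ) ≤ α * μ0 ω + (1 - α) * μ ω
        nlinarith [hα.1, hα.2]
      · simp only [hν]
        rw [Finset.sum_add_distrib, ← Finset.mul_sum, ← Finset.mul_sum, hμ0.2, hμ.2]
        ring
    have hνge : ∀ ω, α * μ0 ω ≤ ν ω := by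
      intro ω
      have := hμ.1 ω
      show α * μ0 ω ≤ α * μ0 ω + (1 - α) * μ ω
      nlinarith [hα.2]
    have hne : { s : ℝ | ∃ a : A,
          (∀ a', ∑ ω, (α * μ0 ω + (1 - α) * μ ω) * u ω a' ≤
                 ∑ ω, (α * μ0 ω + (1 - α) * μ ω) * u ω a) ∧
          s = ∑ ω, μ ω * u ω a }.Nonempty := by
      obtain ⟨a0, _, ha0⟩ := Finset.exists_max_image Finset.univ
        (fun a => ∑ ω, ν ω * u ω a) Finset.univ_nonempty
      exact ⟨∑ ω, μ ω * u ω a0, a0, fun a' => ha0 a' (Finset.mem_univ a'), rfl⟩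
    apply csSup_le hne
    rintro s ⟨a, hopt, rfl⟩
    -- a is not ωbar-optimal, hence u ωbar a ≤ M ωbar - δ
    have haN : a ∈ N := hNmem ν hνbel hνge a hopt
    have hle : u ωbar a ≤ M ωbar - δ := by
      have := Finset.le_sup' (u ωbar) haN
      rw [hδdef]
      linarith
    have hbd : ∀ ω, μ ω * u ω a ≤ μ ω * M ω := by
      intro ω
      exact mul_le_mul_of_nonneg_left (Finset.le_sup' (u ω) (Finset.mem_univ a)) (hμ.1 ω)
    have hbar : μ ωbar * u ωbar a ≤ μ ωbar * M ωbar - μ ωbar * δ := by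
      have := mul_le_mul_of_nonneg_left hle (hμ.1 ωbar)
      nlinarith
    rw [← Finset.add_sum_erase Finset.univ (fun ω => μ ω * u ω a) (Finset.mem_univ ωbar),
        ← Finset.add_sum_erase Finset.univ (fun ω => μ ω * M ω) (Finset.mem_univ ωbar)]
    have hsum : ∑ ω ∈ Finset.univ.erase ωbar, μ ω * u ω a ≤
        ∑ ω ∈ Finset.univ.erase ωbar, μ ω * M ω :=
      Finset.sum_le_sum (fun ω _ => hbd ω)
    linarith
  -- main bound
  set C : ℝ := ∑ ω, μ0 ω * M ω - μ0 ωbar * δ with hC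
  have hmain : sSup { r : ℝ | ∃ (T : Finset (Ω → ℝ)) (τ : (Ω → ℝ) → ℝ),
        (∀ μ ∈ T, IsBelief μ) ∧ (∀ μ ∈ T, 0 ≤ τ μ) ∧ (∑ μ ∈ T, τ μ = 1) ∧
        (∀ ω, ∑ μ ∈ T, τ μ * μ ω = μ0 ω) ∧
        r = ∑ μ ∈ T, τ μ * sSup { s : ℝ | ∃ a : A,
              (∀ a', ∑ ω, (α * μ0 ω + (1 - α) * μ ω) * u ω a' ≤
                     ∑ ω, (α * μ0 ω + (1 - α) * μ ω) * u ω a) ∧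
              s = ∑ ω, μ ω * u ω a } } ≤ C := by
    apply csSup_le
    · -- nonempty: no-information signal
      refine ⟨1 * sSup { s : ℝ | ∃ a : A,
              (∀ a', ∑ ω, (α * μ0 ω + (1 - α) * μ0 ω) * u ω a' ≤
                     ∑ ω, (α * μ0 ω + (1 - α) * μ0 ω) * u ω a) ∧
              s = ∑ ω, μ0 ω * u ω a }, {μ0}, fun _ => 1, ?_, ?_, ?_, ?_, ?_⟩
      · intro μ hμ; rw [Finset.mem_singleton] at hμ; rwa [hμ]
      · intro μ _; norm_num
      · simp
      · intro ω; simp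
      · simp
    · rintro r ⟨T, τ, hTbel, hτnn, hτsum, hBayes, rfl⟩
      have step1 : ∑ μ ∈ T, τ μ * sSup { s : ℝ | ∃ a : A,
            (∀ a', ∑ ω, (α * μ0 ω + (1 - α) * μ ω) * u ω a' ≤
                   ∑ ω, (α * μ0 ω + (1 - α) * μ ω) * u ω a) ∧
            s = ∑ ω, μ ω * u ω a }
          ≤ ∑ μ ∈ T, τ μ * (∑ ω, μ ω * M ω - μ ωbar * δ) := by
        apply Finset.sum_le_sum
        intro μ hμ
        exact mul_le_mul_of_nonneg_left (hinner μ (hTbel μ hμ)) (hτnn μ hμ)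
      have step2 : ∑ μ ∈ T, τ μ * (∑ ω, μ ω * M ω - μ ωbar * δ) = C := by
        rw [hC]
        simp_rw [mul_sub]
        rw [Finset.sum_sub_distrib]
        congr 1
        · simp_rw [Finset.mul_sum]
          rw [Finset.sum_comm]
          refine Finset.sum_congr rfl fun ω _ => ?_
          simp_rw [← mul_assoc]
          rw [← Finset.sum_mul, hBayes ω]
        · simp_rw [← mul_assoc]
          rw [← Finset.sum_mul, hBayes ωbar]
      linarith
  have hCF : C < ∑ ω, μ0 ω * M ω := by
    rw [hC]
    have := mul_pos (hfull ωbar) hδpos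
    linarith
  exact lt_of_le_of_lt hmain hCF
end

section
/- (Corollary 1, necessity ingredient for two states) Let Ω be a set with exactly two elements, A a finite nonempty set, u : Ω × A → ℝ, μ0 ∈ Δ(Ω) a full-support prior, and α ∈ [0,1). Fix ω ∈ Ω and suppose there exist μ ∈ Δ(Ω) with μ(ω') ≥ α·μ0(ω') for both ω' ∈ Ω, and an action a ∈ A with a ∈ argmax_{a'∈A} u(ω,a') and a ∈ argmax_{a'∈A} Σ_{ω'} μ(ω')·u(ω',a'). Then the intersection argmax_{a'∈A} u(ω,a') ∩ argmax_{a'∈A} Σ_{ω'} (α·μ0 + (1−α)·δ_ω)(ω')·u(ω',a') is nonempty, where δ_ω is the point mass at ω. Consequently, with two states, one-shot full revelation with a biased receiver attains the full-information payoff whenever the disjointness condition of Corollary 1 fails at every state. -/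
/-- Corollary 1, necessity ingredient for two states: with two states,
if some action is simultaneously optimal at state `ω` and at some feasible belief
`μ ∈ F(μ0,α)`, then some action is simultaneously optimal at state `ω` and at the
biased posterior `α·μ0 + (1−α)·δ_ω` obtained after a fully revealing signal in `ω`. -/
theorem stmt_9 {Ω A : Type*} [Fintype Ω] [DecidableEq Ω] [Fintype A] [Nonempty A]
    (hcard : Fintype.card Ω = 2)
    (u : Ω → A → ℝ)
    (μ0 : Ω → ℝ) (hμ0 : IsBelief μ0) (hfull : ∀ ω, 0 < μ0 ω)
    (α : ℝ) (hα : 0 ≤ α ∧ α < 1)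
    (ω : Ω)
    (hex : ∃ (μ : Ω → ℝ) (a : A), IsBelief μ ∧ (∀ ω', α * μ0 ω' ≤ μ ω') ∧
      (∀ a', u ω a' ≤ u ω a) ∧
      (∀ a', ∑ ω', μ ω' * u ω' a' ≤ ∑ ω', μ ω' * u ω' a)) :
    ∃ a : A, (∀ a', u ω a' ≤ u ω a) ∧
      (∀ a', ∑ ω', (α * μ0 ω' + (1 - α) * (if ω' = ω then (1 : ℝ) else 0)) * u ω' a' ≤
             ∑ ω', (α * μ0 ω' + (1 - α) * (if ω' = ω then (1 : ℝ) else 0)) * u ω' a) := by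
  obtain ⟨hα0, hα1⟩ := hα
  obtain ⟨μ, a, ⟨hμnn, hμ1⟩, hF, hopt1, hopt2⟩ := hex
  obtain ⟨ω', hne⟩ : ∃ ω', ω' ≠ ω := Fintype.exists_ne_of_one_lt_card (by omega) ω
  have huniv : (Finset.univ : Finset Ω) = {ω, ω'} := by
    symm
    apply Finset.eq_of_subset_of_card_le (Finset.subset_univ _)
    rw [Finset.card_univ, hcard, Finset.card_pair (Ne.symm hne)]
  have hsum : ∀ f : Ω → ℝ, ∑ x, f x = f ω + f ω' := by
    intro f; rw [huniv, Finset.sum_pair (Ne.symm hne)]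
  refine ⟨a, hopt1, ?_⟩
  intro a'
  have h1 := hopt1 a'
  have h2 := hopt2 a'
  rw [hsum, hsum] at h2
  rw [hsum, hsum]
  simp only [if_pos rfl, if_neg hne, if_true]
  have hμsum0 : μ ω = 1 - μ ω' := by
    have := hsum μ; rw [hμ1] at this; linarith
  have hμ0sum0 : μ0 ω = 1 - μ0 ω' := by
    have := hsum μ0; rw [hμ0.2] at this; linarith
  rw [hμ0sum0]
  rw [hμsum0] at h2
  have hμsum : μ ω + μ ω' = 1 := by rw [← hsum]; exact hμ1
  have hμ0sum : μ0 ω + μ0 ω' = 1 := by rw [← hsum]; exact hμ0.2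
  have hb : α * μ0 ω' ≤ μ ω' := hF ω'
  have hb0 : 0 ≤ α * μ0 ω' := mul_nonneg hα0 (hfull ω').le
  rcases (hμnn ω').eq_or_lt with hq | hq
  · have hz : α * μ0 ω' = 0 := le_antisymm (hb.trans hq.ge) hb0
    have hc : 0 ≤ α * (1 - μ0 ω') + (1 - α) * 1 := by nlinarith [(hfull ω).le, hμ0sum0 ▸ (hfull ω)]
    have h3 : α * μ0 ω' * u ω' a' = 0 := by rw [hz]; ring
    have h4 : α * μ0 ω' * u ω' a = 0 := by rw [hz]; ring
    nlinarith [mul_le_mul_of_nonneg_left h1 hc]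
  · nlinarith [mul_nonneg (sub_nonneg.2 hb) (sub_nonneg.2 h1),
      mul_nonneg hb0 (sub_nonneg.2 h2),
      mul_le_mul_of_nonneg_left h1 (mul_nonneg hα0 (hfull ω).le)]
end

section
/- (Convexity of the biased value function in the Crawford–Sobel environment) Let Ω be a finite nonempty set, e : Ω → ℝ an assignment of real values to states, μ0 ∈ Δ(Ω) a full-support prior, α ∈ [0,1), and b ∈ ℝ. For ν ∈ Δ(Ω) write m(ν) = Σ_ω ν(ω)·e(ω). Define f : Δ(Ω) → ℝ by f(μ) = − Σ_ω μ(ω)·( m(α·μ0 + (1−α)·μ) − e(ω) − b )². Then f is convex on Δ(Ω). -/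
/-- in the Crawford–Sobel environment with a conservative-Bayesian
receiver, the sender's expected utility as a function of the Bayesian posterior,
`f(μ) = − Σ_ω μ(ω)·( m(α·μ0 + (1−α)·μ) − e(ω) − b )²` where `m(ν) = Σ_ω ν(ω)·e(ω)`,
is convex on the set of beliefs. -/
theorem stmt_10 {Ω : Type*} [Fintype Ω] [Nonempty Ω]
    (e : Ω → ℝ)
    (μ0 : Ω → ℝ) (hμ0 : IsBelief μ0) (hfull : ∀ ω, 0 < μ0 ω)
    (α : ℝ) (hα : 0 ≤ α ∧ α < 1) (b : ℝ) :
    ConvexOn ℝ { μ : Ω → ℝ | IsBelief μ }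
      (fun μ : Ω → ℝ =>
        - ∑ ω, μ ω * ((∑ ω', (α * μ0 ω' + (1 - α) * μ ω') * e ω') - e ω - b) ^ 2) := by
  set m0 : ℝ := ∑ ω', μ0 ω' * e ω' with hm0
  have expand : ∀ μ : Ω → ℝ, (∑ ω, μ ω) = 1 →
      - ∑ ω, μ ω * ((∑ ω', (α * μ0 ω' + (1 - α) * μ ω') * e ω') - e ω - b) ^ 2
      = -(α * m0 + (1 - α) * (∑ ω, μ ω * e ω) - b) ^ 2
        + 2 * (α * m0 + (1 - α) * (∑ ω, μ ω * e ω) - b) * (∑ ω, μ ω * e ω)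
        - ∑ ω, μ ω * (e ω) ^ 2 := by
    intro μ hsum
    have hM : (∑ ω', (α * μ0 ω' + (1 - α) * μ ω') * e ω')
        = α * m0 + (1 - α) * (∑ ω, μ ω * e ω) := by
      rw [hm0, Finset.mul_sum, Finset.mul_sum, ← Finset.sum_add_distrib]
      exact Finset.sum_congr rfl (fun ω _ => by ring)
    rw [hM]
    set M : ℝ := α * m0 + (1 - α) * (∑ ω, μ ω * e ω) with hMdef
    have hterm : ∀ ω : Ω, μ ω * (M - e ω - b) ^ 2
        = (M - b) ^ 2 * μ ω - (2 * (M - b)) * (μ ω * e ω) + μ ω * (e ω) ^ 2 := by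
      intro ω; ring
    rw [Finset.sum_congr rfl (fun ω _ => hterm ω), Finset.sum_add_distrib,
      Finset.sum_sub_distrib, ← Finset.mul_sum, ← Finset.mul_sum, hsum]
    ring
  constructor
  · -- convexity of the set of beliefs
    intro μ hμ ν hν a c ha hc hac
    refine ⟨fun ω => ?_, ?_⟩
    · exact add_nonneg (mul_nonneg ha (hμ.1 ω)) (mul_nonneg hc (hν.1 ω))
    · have : ∑ ω, (a * μ ω + c * ν ω) = a * (∑ ω, μ ω) + c * (∑ ω, ν ω) := by
        rw [Finset.mul_sum, Finset.mul_sum, ← Finset.sum_add_distrib]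
      simpa [this, hμ.2, hν.2] using hac
  · intro μ hμ ν hν a c ha hc hac
    have hcomb : (∑ ω, (a • μ + c • ν) ω) = 1 := by
      have : ∑ ω, (a * μ ω + c * ν ω) = a * (∑ ω, μ ω) + c * (∑ ω, ν ω) := by
        rw [Finset.mul_sum, Finset.mul_sum, ← Finset.sum_add_distrib]
      simp only [Pi.add_apply, Pi.smul_apply, smul_eq_mul]
      rw [this, hμ.2, hν.2]; linarith
    have e1 := expand μ hμ.2
    have e2 := expand ν hν.2
    have e3 := expand (a • μ + c • ν) hcomb
    simp only [Pi.add_apply, Pi.smul_apply, smul_eq_mul] at e3 ⊢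
    rw [e3, e1, e2]
    set L1 : ℝ := ∑ ω, μ ω * e ω
    set L2 : ℝ := ∑ ω, ν ω * e ω
    set Q1 : ℝ := ∑ ω, μ ω * (e ω) ^ 2
    set Q2 : ℝ := ∑ ω, ν ω * (e ω) ^ 2
    have hL : (∑ ω, (a * μ ω + c * ν ω) * e ω) = a * L1 + c * L2 := by
      rw [Finset.mul_sum, Finset.mul_sum, ← Finset.sum_add_distrib]
      exact Finset.sum_congr rfl (fun ω _ => by ring)
    have hQ : (∑ ω, (a * μ ω + c * ν ω) * (e ω) ^ 2) = a * Q1 + c * Q2 := by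
      rw [Finset.mul_sum, Finset.mul_sum, ← Finset.sum_add_distrib]
      exact Finset.sum_congr rfl (fun ω _ => by ring)
    rw [hL, hQ]
    have hc' : c = 1 - a := by linarith
    subst hc'
    have key : 0 ≤ (1 - α) * (1 + α) * (a * (1 - a) * (L1 - L2) ^ 2) := by
      have h1 : (0:ℝ) < 1 - α := by linarith [hα.2]
      have h2 : (0:ℝ) ≤ 1 + α := by linarith [hα.1]
      exact mul_nonneg (mul_nonneg h1.le h2)
        (mul_nonneg (mul_nonneg ha hc) (sq_nonneg _))
    nlinarith [key]
end

section
/- (Proposition 3, improvement step) Let Ω be a finite nonempty set, e : Ω → ℝ^k, β ∈ ℝ^k, μ0 ∈ Δ(Ω) with full support, m = Σ_ω μ0(ω)·e(ω), and α ∈ (0,1). If ω̄ ∈ Ω satisfies ⟨β, e(ω̄)⟩ > ⟨β, m⟩, then μ0(ω̄)·⟨β, α²·m + (1−α²)·e(ω̄)⟩ + Σ_{ω≠ω̄} μ0(ω)·⟨β, α·m + (1−α)·e(ω)⟩ > ⟨β, m⟩. In words, the sequential strategy that fully reveals the state and then sends a second fully revealing signal only in state ω̄ yields, under PbP-N updating,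 a strictly higher payoff to a sender with linear transparent motives v(a) = ⟨β, a⟩ than the (constant) one-shot payoff ⟨β, m⟩. -/
/-- Proposition 3, improvement step: if `⟨β, e(ω̄)⟩ > ⟨β, m⟩` for the
prior mean `m`, then the sequential strategy fully revealing the state and sending a
second fully revealing signal only in state `ω̄` yields, under PbP-N updating, a
strictly higher payoff to a sender with linear transparent motives than the
(constant) one-shot payoff `⟨β, m⟩`. -/
theorem stmt_14 {Ω : Type*} [Fintype Ω] [Nonempty Ω] [DecidableEq Ω] (k : ℕ)
    (e : Ω → Fin k → ℝ) (β : Fin k → ℝ)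
    (μ0 : Ω → ℝ) (hμ0 : IsBelief μ0) (hfull : ∀ ω, 0 < μ0 ω)
    (m : Fin k → ℝ) (hm : ∀ i, m i = ∑ ω, μ0 ω * e ω i)
    (α : ℝ) (hα : 0 < α ∧ α < 1)
    (ωbar : Ω) (hωbar : ∑ i, β i * m i < ∑ i, β i * e ωbar i) :
    ∑ i, β i * m i <
      μ0 ωbar * (∑ i, β i * (α ^ 2 * m i + (1 - α ^ 2) * e ωbar i)) +
        ∑ ω ∈ Finset.univ.erase ωbar,
          μ0 ω * (∑ i, β i * (α * m i + (1 - α) * e ω i)) := by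
  obtain ⟨hα0, hα1⟩ := hα
  obtain ⟨hnn, hsum⟩ := hμ0
  set S : ℝ := ∑ i, β i * m i with hS
  set f : Ω → ℝ := fun ω => ∑ i, β i * e ω i with hf
  have hBm : S = ∑ ω, μ0 ω * f ω := by
    rw [hS]
    have : ∀ i, β i * m i = ∑ ω, β i * (μ0 ω * e ω i) := by
      intro i; rw [hm i, Finset.mul_sum]
    rw [Finset.sum_congr rfl fun i _ => this i, Finset.sum_comm]
    refine Finset.sum_congr rfl fun ω _ => ?_
    rw [hf, Finset.mul_sum]
    exact Finset.sum_congr rfl fun i _ => by ring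
  have h1 : ∑ i, β i * (α ^ 2 * m i + (1 - α ^ 2) * e ωbar i)
      = α ^ 2 * S + (1 - α ^ 2) * f ωbar := by
    rw [hS, hf, Finset.mul_sum, Finset.mul_sum, ← Finset.sum_add_distrib]
    exact Finset.sum_congr rfl fun i _ => by ring
  have h2 : ∀ ω, ∑ i, β i * (α * m i + (1 - α) * e ω i)
      = α * S + (1 - α) * f ω := by
    intro ω
    rw [hS, hf, Finset.mul_sum, Finset.mul_sum, ← Finset.sum_add_distrib]
    exact Finset.sum_congr rfl fun i _ => by ring
  have he1 : ∑ ω ∈ Finset.univ.erase ωbar, μ0 ω = 1 - μ0 ωbar := by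
    rw [Finset.sum_erase_eq_sub (Finset.mem_univ _), hsum]
  have he2 : ∑ ω ∈ Finset.univ.erase ωbar, μ0 ω * f ω = S - μ0 ωbar * f ωbar := by
    rw [Finset.sum_erase_eq_sub (Finset.mem_univ _), ← hBm]
  have he3 : ∑ ω ∈ Finset.univ.erase ωbar, μ0 ω * (∑ i, β i * (α * m i + (1 - α) * e ω i))
      = α * S * (1 - μ0 ωbar) + (1 - α) * (S - μ0 ωbar * f ωbar) := by
    have : ∀ ω ∈ Finset.univ.erase ωbar,
        μ0 ω * (∑ i, β i * (α * m i + (1 - α) * e ω i))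
        = α * S * μ0 ω + (1 - α) * (μ0 ω * f ω) := by
      intro ω _; rw [h2 ω]; ring
    rw [Finset.sum_congr rfl this, Finset.sum_add_distrib, ← Finset.mul_sum,
      ← Finset.mul_sum, he1, he2]
  rw [h1, he3]
  have key : 0 < μ0 ωbar * (α * (1 - α)) * (f ωbar - S) := by
    apply mul_pos (mul_pos (hfull ωbar) (mul_pos hα0 (by linarith)))
    have : S < f ωbar := hωbar
    linarith
  nlinarith [key]
end

section
/- (Belief drift under repeated signals, from the proof of Proposition 4) Let α ∈ [0,1), ε ∈ (0, 1/2), and p₀ ∈ (0,1), and define recursively p_{n+1} = α·p_n + (1−α)·( p_n·(1−ε) / ( p_n·(1−ε) + (1−p_n)·ε ) ). Then the sequence (p_n) is strictly increasing and converges to 1. -/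
/-!
Each PbP-N step is a convex combination of the current belief with its Bayesian update, and for a
signal favouring `ω̄` (`ε < 1/2`) the Bayesian update of an interior belief lies strictly between
it and `1`; so the beliefs increase and stay below `1`. Their limit `L` is then a fixed point of
the (continuous) update map, and an interior point is never fixed, so `L = 1`.
-/

open Filter Set Topology

theorem strictMono_and_tendsto_of_lt_map {g : ℝ → ℝ} {a b : ℝ}
    (hg : ∀ x ∈ Ioo a b, x < g x ∧ g x < b) (hcont : ContinuousOn g (Ioo a b))
    {p : ℕ → ℝ} (h0 : p 0 ∈ Ioo a b) (hrec : ∀ n, p (n + 1) = g (p n)) :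
    StrictMono p ∧ Tendsto p atTop (𝓝 b) := by
  have hmem : ∀ n, p n ∈ Ioo a b := by
    intro n
    induction n with
    | zero => exact h0
    | succ n ih =>
      rw [hrec n]
      exact ⟨ih.1.trans (hg _ ih).1, (hg _ ih).2⟩
  have hmono : StrictMono p :=
    strictMono_nat_of_lt_succ fun n => (hrec n).symm ▸ (hg _ (hmem n)).1
  refine ⟨hmono, ?_⟩
  have hbdd : BddAbove (range p) := ⟨b, by rintro _ ⟨n, rfl⟩; exact (hmem n).2.le⟩
  have hL : Tendsto p atTop (𝓝 (⨆ n, p n)) := tendsto_atTop_ciSup hmono.monotone hbdd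
  set L := ⨆ n, p n
  have hLb : L ≤ b := ciSup_le fun n => (hmem n).2.le
  rcases hLb.lt_or_eq with hLb | rfl
  · have hLmem : L ∈ Ioo a b := ⟨h0.1.trans_le (le_ciSup hbdd 0), hLb⟩
    have hfix : g L = L := by
      refine tendsto_nhds_unique ?_ (hL.comp (tendsto_add_atTop_nat 1))
      simp only [Function.comp_def, hrec]
      exact ((hcont.continuousAt (isOpen_Ioo.mem_nhds hLmem)).tendsto).comp hL
    exact absurd hfix (hg L hLmem).1.ne'
  · exact hL

noncomputable def bayesUpdate (ε p : ℝ) : ℝ :=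
  p * (1 - ε) / (p * (1 - ε) + (1 - p) * ε)

noncomputable def pbpUpdate (α ε p : ℝ) : ℝ :=
  α * p + (1 - α) * bayesUpdate ε p

section

variable {α ε : ℝ}

lemma bayesUpdate_denom_pos (hε₀ : 0 < ε) (hε₁ : ε < 1) {p : ℝ} (hp : p ∈ Ioo 0 1) :
    0 < p * (1 - ε) + (1 - p) * ε :=
  add_pos (mul_pos hp.1 (sub_pos.2 hε₁)) (mul_pos (sub_pos.2 hp.2) hε₀)

lemma lt_bayesUpdate_and_lt_one (hε : 0 < ε ∧ ε < 1 / 2) {p : ℝ} (hp : p ∈ Ioo 0 1) :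
    p < bayesUpdate ε p ∧ bayesUpdate ε p < 1 := by
  have hd := bayesUpdate_denom_pos hε.1 (by linarith) hp
  obtain ⟨hp0, hp1⟩ := hp
  -- `bayesUpdate ε p - p = p (1 - p) (1 - 2ε) / denominator`
  refine ⟨(lt_div_iff₀ hd).2 ?_, (div_lt_one hd).2 ?_⟩
  · nlinarith [mul_pos (mul_pos hp0 (sub_pos.2 hp1)) (by linarith : (0 : ℝ) < 1 - 2 * ε)]
  · nlinarith

lemma continuousOn_bayesUpdate (hε₀ : 0 < ε) (hε₁ : ε < 1) : ContinuousOn (bayesUpdate ε) (Ioo 0 1) :=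
  ContinuousOn.div (by fun_prop) (by fun_prop) fun _ hp => (bayesUpdate_denom_pos hε₀ hε₁ hp).ne'

lemma lt_pbpUpdate_and_lt_one (hα : 0 ≤ α ∧ α < 1) (hε : 0 < ε ∧ ε < 1 / 2) {p : ℝ}
    (hp : p ∈ Ioo 0 1) : p < pbpUpdate α ε p ∧ pbpUpdate α ε p < 1 := by
  obtain ⟨hlt, hlt1⟩ := lt_bayesUpdate_and_lt_one hε hp
  unfold pbpUpdate
  constructor <;> nlinarith [hp.2]

lemma continuousOn_pbpUpdate (hε₀ : 0 < ε) (hε₁ : ε < 1) : ContinuousOn (pbpUpdate α ε) (Ioo 0 1) :=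
  (continuous_const.mul continuous_id).continuousOn.add
    (continuousOn_const.mul (continuousOn_bayesUpdate hε₀ hε₁))

end

/-- belief drift under repeated signals: with bias `α ∈ [0,1)`,
signal noise `ε ∈ (0,1/2)`, starting belief `p 0 ∈ (0,1)`, and the PbP-N recursion
`p (n+1) = α·p n + (1−α)·(p n (1−ε) / (p n (1−ε) + (1−p n) ε))`, the sequence `p`
is strictly increasing and converges to `1`. -/
theorem stmt_15 (α ε : ℝ) (hα : 0 ≤ α ∧ α < 1) (hε : 0 < ε ∧ ε < 1/2)
    (p : ℕ → ℝ) (hp0 : 0 < p 0 ∧ p 0 < 1)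
    (hrec : ∀ n, p (n + 1) =
      α * p n + (1 - α) * (p n * (1 - ε) / (p n * (1 - ε) + (1 - p n) * ε))) :
    StrictMono p ∧ Filter.Tendsto p Filter.atTop (nhds 1) := by
  exact strictMono_and_tendsto_of_lt_map (fun _ hp => lt_pbpUpdate_and_lt_one hα hε hp)
    (continuousOn_pbpUpdate hε.1 (by linarith)) hp0 hrec
end
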